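/- Let X be a space of cardinality less than 𝔟 and let 𝒦 be a family of subsets of X closed under finite unions. If X is star-σ𝒦, then X satisfies SS*_𝒦(O,Γ): for each sequence (Uₙ) of open covers there are Kₙ ∈ 𝒦 such that every x ∈ X lies in St(Kₙ,Uₙ) for all but finitely many n. -/

import Mathlib

open Set Filter

variable {X : Type u}

def star {X : Type u} (A : Set X) (U : Set (Set X)) : Set X :=
  ⋃₀ {u ∈ U | (u ∩ A).Nonempty}

def IsOpenCover {X : Type u} [TopologicalSpace X] (U : Set (Set X)) : Prop :=
  (∀ u ∈ U, IsOpen u) ∧ ⋃₀ U = univ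

noncomputable def domNum : Cardinal :=
  sInf {c | ∃ D : Set (ℕ → ℕ), Cardinal.mk D = c ∧
    ∀ f : ℕ → ℕ, ∃ g ∈ D, ∀ᶠ n in atTop, f n ≤ g n}

noncomputable def boundNum : Cardinal :=
  sInf {c | ∃ B : Set (ℕ → ℕ), Cardinal.mk B = c ∧
    ¬ ∃ g : ℕ → ℕ, ∀ f ∈ B, ∀ᶠ n in atTop, f n ≤ g n}

noncomputable def covMeager : Cardinal :=
  sInf {c | ∃ F : Set (ℕ → ℕ), Cardinal.mk F = c ∧
    ¬ ∃ g : ℕ → ℕ, ∀ f ∈ F, {n | g n = f n}.Infinite}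

def StronglyStarLindelof (X : Type u) [TopologicalSpace X] : Prop :=
  ∀ U : Set (Set X), IsOpenCover U →
    ∃ C : Set X, C.Countable ∧ star C U = univ

def AbsStronglyStarLindelof (X : Type u) [TopologicalSpace X] : Prop :=
  ∀ U : Set (Set X), IsOpenCover U → ∀ D : Set X, Dense D →
    ∃ C : Set X, C ⊆ D ∧ C.Countable ∧ star C U = univ

def StronglyStarMenger (X : Type u) [TopologicalSpace X] : Prop :=
  ∀ U : ℕ → Set (Set X), (∀ n, IsOpenCover (U n)) →
    ∃ F : ℕ → Finset X, ⋃ n, star (↑(F n)) (U n) = univ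

def AbsStronglyStarMenger (X : Type u) [TopologicalSpace X] : Prop :=
  ∀ U : ℕ → Set (Set X), (∀ n, IsOpenCover (U n)) → ∀ D : Set X, Dense D →
    ∃ F : ℕ → Finset X, (∀ n, ↑(F n) ⊆ D) ∧ ⋃ n, star (↑(F n)) (U n) = univ

def SelStronglyStarMenger (X : Type u) [TopologicalSpace X] : Prop :=
  ∀ U : ℕ → Set (Set X), (∀ n, IsOpenCover (U n)) →
    ∀ D : ℕ → Set X, (∀ n, Dense (D n)) →
      ∃ F : ℕ → Finset X, (∀ n, ↑(F n) ⊆ D n) ∧ ⋃ n, star (↑(F n)) (U n) = univ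

def StronglyStarHurewicz (X : Type u) [TopologicalSpace X] : Prop :=
  ∀ U : ℕ → Set (Set X), (∀ n, IsOpenCover (U n)) →
    ∃ F : ℕ → Finset X, ∀ x : X, ∀ᶠ n in atTop, x ∈ star (↑(F n)) (U n)

def SelStronglyStarHurewicz (X : Type u) [TopologicalSpace X] : Prop :=
  ∀ U : ℕ → Set (Set X), (∀ n, IsOpenCover (U n)) →
    ∀ D : ℕ → Set X, (∀ n, Dense (D n)) →
      ∃ F : ℕ → Finset X, (∀ n, ↑(F n) ⊆ D n) ∧
        ∀ x : X, ∀ᶠ n in atTop, x ∈ star (↑(F n)) (U n)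

def StronglyStarRothberger (X : Type u) [TopologicalSpace X] : Prop :=
  ∀ U : ℕ → Set (Set X), (∀ n, IsOpenCover (U n)) →
    ∃ x : ℕ → X, ⋃ n, star {x n} (U n) = univ

def SelStronglyStarRothberger (X : Type u) [TopologicalSpace X] : Prop :=
  ∀ U : ℕ → Set (Set X), (∀ n, IsOpenCover (U n)) →
    ∀ D : ℕ → Set X, (∀ n, Dense (D n)) →
      ∃ d : ℕ → X, (∀ n, d n ∈ D n) ∧ ⋃ n, star {d n} (U n) = univ

def DiscreteIn {X : Type u} [TopologicalSpace X] (C : Set X) : Prop :=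
  ∀ x ∈ C, ∃ O : Set X, IsOpen O ∧ O ∩ C = {x}

def CountableExtent (X : Type u) [TopologicalSpace X] : Prop :=
  ∀ C : Set X, IsClosed C → DiscreteIn C → C.Countable

def SelSScdOGamma (X : Type u) [TopologicalSpace X] : Prop :=
  ∀ U : ℕ → Set (Set X), (∀ n, IsOpenCover (U n)) →
    ∀ D : ℕ → Set X, (∀ n, Dense (D n)) →
      ∃ C : ℕ → Set X, (∀ n, C n ⊆ D n ∧ IsClosed (C n) ∧ DiscreteIn (C n)) ∧
        ∀ x : X, ∀ᶠ n in atTop, x ∈ star (C n) (U n)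

def SelSScdOO (X : Type u) [TopologicalSpace X] : Prop :=
  ∀ U : ℕ → Set (Set X), (∀ n, IsOpenCover (U n)) →
    ∀ D : ℕ → Set X, (∀ n, Dense (D n)) →
      ∃ C : ℕ → Set X, (∀ n, C n ⊆ D n ∧ IsClosed (C n) ∧ DiscreteIn (C n)) ∧
        ⋃ n, star (C n) (U n) = univ

def StarSigmaK (X : Type u) [TopologicalSpace X] (K : Set (Set X)) : Prop :=
  ∀ U : Set (Set X), IsOpenCover U →
    ∃ E : ℕ → Set X, (∀ m, E m ∈ K) ∧ star (⋃ m, E m) U = univ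

def AbsStarSigmaK (X : Type u) [TopologicalSpace X] (K : Set (Set X)) : Prop :=
  ∀ D : Set X, Dense D → ∀ U : Set (Set X), IsOpenCover U →
    ∃ E : ℕ → Set X, (∀ m, E m ∈ K ∧ E m ⊆ D) ∧ star (⋃ m, E m) U = univ

def AbsNbhdStarMenger (X : Type u) [TopologicalSpace X] : Prop :=
  ∀ U : ℕ → Set (Set X), (∀ n, IsOpenCover (U n)) → ∀ D : Set X, Dense D →
    ∃ F : ℕ → Finset X, (∀ n, ↑(F n) ⊆ D) ∧
      ∀ O : ℕ → Set X, (∀ n, IsOpen (O n) ∧ ↑(F n) ⊆ O n) →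
        ⋃ n, star (O n) (U n) = univ

def AbsNbhdStarHurewicz (X : Type u) [TopologicalSpace X] : Prop :=
  ∀ U : ℕ → Set (Set X), (∀ n, IsOpenCover (U n)) → ∀ D : Set X, Dense D →
    ∃ F : ℕ → Finset X, (∀ n, ↑(F n) ⊆ D) ∧
      ∀ O : ℕ → Set X, (∀ n, IsOpen (O n) ∧ ↑(F n) ⊆ O n) →
        ∀ x : X, ∀ᶠ n in atTop, x ∈ star (O n) (U n)

/-!
For each `n`, star-σ𝒦 gives `Eₙ₀, Eₙ₁, … ∈ 𝒦` whose union stars `Uₙ` onto `X`, so every point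
`x` has an index `f x n` with `x ∈ St(E_{n, f x n}, Uₙ)`. Fewer than `𝔟` functions `f x` are
dominated by a single `g`; then `Kₙ = Eₙ₀ ∪ ⋯ ∪ E_{n, g n}` lies in `𝒦` and, by monotonicity
of the star, stars `x` into `Uₙ` as soon as `f x n ≤ g n`, i.e. for almost all `n`.
-/

lemma star_mono {A B : Set X} (h : A ⊆ B) (U : Set (Set X)) : star A U ⊆ star B U :=
  sUnion_subset_sUnion fun _ ⟨hu, hA⟩ => ⟨hu, hA.mono (inter_subset_inter_right _ h)⟩

lemma mem_star_iUnion {ι : Sort*} {E : ι → Set X} {U : Set (Set X)} {x : X} :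
    x ∈ star (⋃ i, E i) U ↔ ∃ i, x ∈ star (E i) U := by
  refine ⟨?_, fun ⟨i, hx⟩ => star_mono (subset_iUnion E i) U hx⟩
  rintro ⟨u, ⟨hu, y, hyu, hyE⟩, hxu⟩
  obtain ⟨i, hyi⟩ := mem_iUnion.mp hyE
  exact ⟨i, u, ⟨hu, y, hyu, hyi⟩, hxu⟩

lemma accumulate_mem_of_union_mem {K : Set (Set X)} (hK : ∀ A ∈ K, ∀ B ∈ K, A ∪ B ∈ K)
    {E : ℕ → Set X} (hE : ∀ m, E m ∈ K) (n : ℕ) : accumulate E n ∈ K := by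
  induction n with
  | zero => simpa using hE 0
  | succ n ih => simpa only [accumulate_succ] using hK _ ih _ (hE (n + 1))

lemma boundNum_le_mk {B : Set (ℕ → ℕ)}
    (hB : ¬ ∃ g : ℕ → ℕ, ∀ f ∈ B, ∀ᶠ n in atTop, f n ≤ g n) : boundNum ≤ Cardinal.mk B :=
  csInf_le' ⟨B, rfl, hB⟩

lemma exists_eventually_le_of_mk_lt_boundNum {ι : Type u} (f : ι → ℕ → ℕ)
    (h : Cardinal.mk ι < Cardinal.lift.{u} boundNum) :
    ∃ g : ℕ → ℕ, ∀ i, ∀ᶠ n in atTop, f i n ≤ g n := by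
  by_contra hf
  refine h.not_ge ?_
  calc Cardinal.lift.{u} boundNum
      ≤ Cardinal.lift.{u} (Cardinal.mk (range f)) :=
        Cardinal.lift_le.mpr <| boundNum_le_mk fun ⟨g, hg⟩ => hf ⟨g, fun i => hg _ ⟨i, rfl⟩⟩
    _ ≤ Cardinal.mk ι := by simpa using Cardinal.mk_range_le_lift (f := f)

theorem stmt5 {X : Type u} [TopologicalSpace X] (K : Set (Set X))
    (hK : ∀ A ∈ K, ∀ B ∈ K, A ∪ B ∈ K)
    (hcard : Cardinal.mk X < Cardinal.lift.{u} boundNum) (hstar : StarSigmaK X K) :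
    ∀ U : ℕ → Set (Set X), (∀ n, IsOpenCover (U n)) →
      ∃ Ks : ℕ → Set X, (∀ n, Ks n ∈ K) ∧
        ∀ x : X, ∀ᶠ n in atTop, x ∈ star (Ks n) (U n) := by
  intro U hU
  choose E hEK hEstar using fun n => hstar (U n) (hU n)
  have hindex : ∀ x n, ∃ m, x ∈ star (E n m) (U n) := fun x n =>
    mem_star_iUnion.mp (hEstar n ▸ mem_univ x)
  choose f hf using hindex
  obtain ⟨g, hg⟩ := exists_eventually_le_of_mk_lt_boundNum f hcard
  refine ⟨fun n => accumulate (E n) (g n),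
    fun n => accumulate_mem_of_union_mem hK (hEK n) (g n), fun x => ?_⟩
  filter_upwards [hg x] with n hn
  exact star_mono (subset_accumulate.trans (monotone_accumulate hn)) (U n) (hf x n)
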